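/- Completeness of the tactics transition system: if the sequent Γ ⊢ A is derivable in natural deduction for minimal propositional logic, then the singleton goal sequence (Γ ⊢ A) transitions in finitely many steps to the empty goal sequence: (Γ ⊢ A) ▷⁺ □. -/
import Mathlib


/-- Formulas of minimal propositional logic. -/
inductive Fm : Type
  | var : ℕ → Fm
  | imp : Fm → Fm → Fm
  | conj : Fm → Fm → Fm
  | disj : Fm → Fm → Fm
deriving DecidableEq

abbrev Ctx := Set Fm

/-- Natural deduction for minimal propositional logic. -/
inductive Nd : Ctx → Fm → Prop
  | hyp {Γ A} : A ∈ Γ → Nd Γ A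
  | impI {Γ A B} : Nd (insert A Γ) B → Nd Γ (Fm.imp A B)
  | impE {Γ A B} : Nd Γ (Fm.imp A B) → Nd Γ A → Nd Γ B
  | andI {Γ A B} : Nd Γ A → Nd Γ B → Nd Γ (Fm.conj A B)
  | andE1 {Γ A B} : Nd Γ (Fm.conj A B) → Nd Γ A
  | andE2 {Γ A B} : Nd Γ (Fm.conj A B) → Nd Γ B
  | orI1 {Γ A B} : Nd Γ A → Nd Γ (Fm.disj A B)
  | orI2 {Γ A B} : Nd Γ B → Nd Γ (Fm.disj A B)
  | orE {Γ A B C} : Nd Γ (Fm.disj A B) → Nd (insert A Γ) C → Nd (insert B Γ) C → Nd Γ C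

/-- Sequents (judgements) Γ ⊢ A. -/
abbrev Seqt := Ctx × Fm

/-- One step of the tactics transition system on goal sequences. -/
inductive Step : List Seqt → List Seqt → Prop
  | intro {Γ A B S} : Step ((Γ, Fm.imp A B) :: S) ((insert A Γ, B) :: S)
  | split {Γ A B S} : Step ((Γ, Fm.conj A B) :: S) ((Γ, A) :: (Γ, B) :: S)
  | left {Γ A B S} : Step ((Γ, Fm.disj A B) :: S) ((Γ, A) :: S)
  | right {Γ A B S} : Step ((Γ, Fm.disj A B) :: S) ((Γ, B) :: S)
  | apply {Γ A B S} :
      Step ((insert (Fm.imp A B) Γ, B) :: S) ((insert (Fm.imp A B) Γ, A) :: S)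
  | destructAnd {Γ A B C S} :
      Step ((insert (Fm.conj A B) Γ, C) :: S) ((insert A (insert B Γ), C) :: S)
  | destructOr {Γ A B C S} :
      Step ((insert (Fm.disj A B) Γ, C) :: S) ((insert A Γ, C) :: (insert B Γ, C) :: S)
  | assert {Γ C S} (A : Fm) : Step ((Γ, C) :: S) ((Γ, A) :: (insert A Γ, C) :: S)
  | cut {Γ C S} (A : Fm) : Step ((Γ, C) :: S) ((Γ, Fm.imp A C) :: (Γ, A) :: S)
  | triv {Γ A S} : A ∈ Γ → Step ((Γ, A) :: S) S


lemma stmt11_aux {Γ : Ctx} {A : Fm} (h : Nd Γ A) :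
    ∀ S : List Seqt, Relation.TransGen Step ((Γ, A) :: S) S := by
  induction h with
  | hyp hA => exact fun S => Relation.TransGen.single (Step.triv hA)
  | impI _ ih =>
      exact fun S => (Relation.TransGen.single Step.intro).trans (ih S)
  | impE _ _ ih1 ih2 =>
      intro S
      exact Relation.TransGen.trans (Relation.TransGen.single (Step.cut _))
        ((ih1 _).trans (ih2 S))
  | andI _ _ ih1 ih2 =>
      intro S
      exact (Relation.TransGen.single Step.split).trans ((ih1 _).trans (ih2 S))
  | andE1 _ ih =>
      intro S
      exact Relation.TransGen.trans (Relation.TransGen.single (Step.assert _))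
        ((ih _).trans ((Relation.TransGen.single Step.destructAnd).trans
          (Relation.TransGen.single (Step.triv (Set.mem_insert _ _)))))
  | andE2 _ ih =>
      intro S
      exact Relation.TransGen.trans (Relation.TransGen.single (Step.assert _))
        ((ih _).trans ((Relation.TransGen.single Step.destructAnd).trans
          (Relation.TransGen.single
            (Step.triv (Set.mem_insert_of_mem _ (Set.mem_insert _ _))))))
  | orI1 _ ih => exact fun S => (Relation.TransGen.single Step.left).trans (ih S)
  | orI2 _ ih => exact fun S => (Relation.TransGen.single Step.right).trans (ih S)
  | orE _ _ _ ih1 ih2 ih3 =>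
      intro S
      exact Relation.TransGen.trans (Relation.TransGen.single (Step.assert _))
        ((ih1 _).trans ((Relation.TransGen.single Step.destructOr).trans
          ((ih2 _).trans (ih3 S))))

theorem stmt11 {Γ : Ctx} {A : Fm} (h : Nd Γ A) :
    Relation.TransGen Step [(Γ, A)] [] := by
  exact stmt11_aux h []
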